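/- Let a be a positive integer and G a graph on n vertices with minimum degree δ(G) ≥ a. If the spectral radius satisfies ρ(G) ≥ n - 2, then the complement of G has at most n - ⌈a/2⌉ - 1 edges. -/

import Mathlib

/-!
Let `x ≥ 0` be a Perron vector of `G`, with largest entry `x u`, and let `a ≤ δ(G)`. Summing
`(d v - a) (x u - x v) ≥ 0` over all `v` and using `∑ d v x v = ρ ∑ x v` (which also gives
`ρ ≥ a`) yields `(ρ - a) ∑ x ≤ (2 e(G) - a n) x u`, while `∑ x ≥ x u + ∑_{w ∼ u} x w = (ρ + 1) x u`.
Hence `(ρ - a)(ρ + 1) ≤ 2 e(G) - a n`, which is the Hong–Nikiforov bound. Its left side is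
increasing in `ρ ≥ n - 2`, so `ρ ≥ n - 2` forces `2 e(G) ≥ n² - 3n + 2 + a`, that is,
`2 e(Ḡ) ≤ 2n - 2 - a`.
-/

open SimpleGraph Finset
open scoped Classical

lemma adjMatrix_isHermitian {V : Type*} [Fintype V] (G : SimpleGraph V)
    [DecidableRel G.Adj] : (G.adjMatrix ℝ).IsHermitian := by
  ext i j
  simp [Matrix.conjTranspose_apply, SimpleGraph.adjMatrix_apply, SimpleGraph.adj_comm]

/-- The spectral radius of a graph: the largest eigenvalue of its adjacency matrix. -/
noncomputable def specRad {n : ℕ} (G : SimpleGraph (Fin n)) : ℝ := by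
  classical
  exact ⨆ i, (adjMatrix_isHermitian G).eigenvalues i

open Matrix

namespace Matrix.IsHermitian

variable {ι : Type*} [Fintype ι] [DecidableEq ι] {A : Matrix ι ι ℝ} (hA : A.IsHermitian)

theorem posSemidef_smul_one_sub {μ : ℝ} (hμ : ∀ i, hA.eigenvalues i ≤ μ) :
    (μ • 1 - A).PosSemidef := by
  have hD : diagonal (fun i => μ - hA.eigenvalues i)
      = μ • 1 - diagonal (RCLike.ofReal ∘ hA.eigenvalues) := by
    ext i j
    by_cases h : i = j <;> simp [h]
  have h : μ • 1 - A = Unitary.conjStarAlgAut ℝ _ hA.eigenvectorUnitary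
      (diagonal fun i => μ - hA.eigenvalues i) := by
    rw [hD, map_sub, map_smul, map_one, ← hA.spectral_theorem]
  rw [h, Unitary.conjStarAlgAut_apply,
    IsUnit.posSemidef_star_right_conjugate_iff Unitary.isUnit_coe, posSemidef_diagonal_iff]
  exact fun i => sub_nonneg.2 (hμ i)

theorem exists_nonneg_mulVec_eq_iSup_eigenvalues [Nonempty ι] (hA₀ : ∀ i j, 0 ≤ A i j) :
    ∃ x : ι → ℝ, 0 ≤ x ∧ x ≠ 0 ∧ A *ᵥ x = (⨆ i, hA.eigenvalues i) • x := by
  obtain ⟨i₀, hi₀⟩ := exists_eq_ciSup_of_finite (f := hA.eigenvalues)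
  set μ := ⨆ i, hA.eigenvalues i
  set v : ι → ℝ := ⇑(hA.eigenvectorBasis i₀)
  have hv : A *ᵥ v = μ • v := by rw [← hi₀]; exact hA.mulVec_eigenvectorBasis i₀
  have hv₀ : v ≠ 0 := by simpa [v] using hA.eigenvectorBasis.orthonormal.ne_zero i₀
  have hM : (μ • 1 - A).PosSemidef :=
    hA.posSemidef_smul_one_sub fun i => le_ciSup (Set.finite_range _).bddAbove i
  have hquad : ∀ y, star y ⬝ᵥ ((μ • 1 - A) *ᵥ y) = μ * (y ⬝ᵥ y) - y ⬝ᵥ (A *ᵥ y) := by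
    intro y
    simp [sub_mulVec, smul_mulVec, dotProduct_sub, dotProduct_smul]
  -- `|v|` attains the maximum `μ` of the Rayleigh quotient, hence lies in the kernel of `μ • 1 - A`
  set y : ι → ℝ := fun i => |v i|
  have hyy : y ⬝ᵥ y = v ⬝ᵥ v := by simp [y, dotProduct, abs_mul_abs_self]
  have hvy : v ⬝ᵥ (A *ᵥ v) ≤ y ⬝ᵥ (A *ᵥ y) := by
    simp only [dotProduct, mulVec, mul_sum]
    refine sum_le_sum fun i _ => sum_le_sum fun j _ => ?_
    calc v i * (A i j * v j) ≤ |v i * (A i j * v j)| := le_abs_self _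
      _ = y i * (A i j * y j) := by rw [abs_mul, abs_mul, abs_of_nonneg (hA₀ i j)]
  have hMy : star y ⬝ᵥ ((μ • 1 - A) *ᵥ y) = 0 := by
    refine le_antisymm ?_ (hM.dotProduct_mulVec_nonneg y)
    have hvAv : v ⬝ᵥ (A *ᵥ v) = μ * (v ⬝ᵥ v) := by rw [hv, dotProduct_smul, smul_eq_mul]
    rw [hquad, hyy]
    linarith
  have hker := (hM.dotProduct_mulVec_zero_iff y).1 hMy
  rw [sub_mulVec, smul_mulVec, one_mulVec, sub_eq_zero] at hker
  exact ⟨y, fun i => abs_nonneg _,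
    fun h => hv₀ (funext fun i => abs_eq_zero.1 (congrFun h i)), hker.symm⟩

end Matrix.IsHermitian

namespace SimpleGraph

variable {V : Type*} [Fintype V] (G : SimpleGraph V) [DecidableRel G.Adj]

theorem sum_degree_mul_eq_of_adjMatrix_mulVec_eq {x : V → ℝ} {μ : ℝ}
    (hx : G.adjMatrix ℝ *ᵥ x = μ • x) : ∑ v, (G.degree v : ℝ) * x v = μ * ∑ v, x v :=
  calc ∑ v, (G.degree v : ℝ) * x v = (1 ᵥ* G.adjMatrix ℝ) ⬝ᵥ x := by simp [dotProduct]
    _ = μ * ∑ v, x v := by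
      rw [← dotProduct_mulVec, hx, dotProduct_smul, one_dotProduct, smul_eq_mul]

theorem sub_mul_add_one_le_of_adjMatrix_mulVec_eq [DecidableEq V] {x : V → ℝ} {μ : ℝ} {a : ℕ}
    (hx₀ : 0 ≤ x) (hx : x ≠ 0) (hμ : G.adjMatrix ℝ *ᵥ x = μ • x) (ha : a ≤ G.minDegree) :
    (μ - a) * (μ + 1) ≤ 2 * #G.edgeFinset - a * Fintype.card V := by
  obtain ⟨i, hi⟩ : ∃ i, x i ≠ 0 := Function.ne_iff.1 hx
  obtain ⟨u, -, hu⟩ := exists_max_image univ x ⟨i, mem_univ i⟩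
  have hxu : 0 < x u := ((hx₀ i).lt_of_ne' hi).trans_le (hu i (mem_univ i))
  have hdeg : ∀ v, (a : ℝ) ≤ G.degree v := fun v => mod_cast ha.trans (G.minDegree_le_degree v)
  have hsum := G.sum_degree_mul_eq_of_adjMatrix_mulVec_eq hμ
  have hedges : ∑ v, (G.degree v : ℝ) = 2 * #G.edgeFinset :=
    mod_cast G.sum_degrees_eq_twice_card_edges
  have hμa : (a : ℝ) ≤ μ := by
    have hpos : 0 < ∑ v, x v := sum_pos' (fun v _ => hx₀ v) ⟨u, mem_univ u, hxu⟩
    refine le_of_mul_le_mul_right ?_ hpos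
    rw [← hsum, mul_sum]
    exact sum_le_sum fun v _ => mul_le_mul_of_nonneg_right (hdeg v) (hx₀ v)
  have hupper : (μ - a) * ∑ v, x v ≤ (2 * #G.edgeFinset - a * Fintype.card V) * x u := by
    have : ∑ v, (G.degree v : ℝ) * x v ≤ ∑ v, ((G.degree v - a) * x u + a * x v) :=
      sum_le_sum fun v _ => by nlinarith [hdeg v, hu v (mem_univ v)]
    rw [sum_add_distrib, ← sum_mul, sum_sub_distrib, hedges, ← mul_sum, hsum] at this
    simp only [sum_const, card_univ, nsmul_eq_mul] at this
    linarith
  have hlower : (μ + 1) * x u ≤ ∑ v, x v := by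
    have hN : ∑ w ∈ G.neighborFinset u, x w = μ * x u := by
      rw [← adjMatrix_mulVec_apply, hμ, Pi.smul_apply, smul_eq_mul]
    calc (μ + 1) * x u = ∑ w ∈ insert u (G.neighborFinset u), x w := by
          rw [sum_insert (G.notMem_neighborFinset_self u), hN]; ring
      _ ≤ ∑ v, x v := sum_le_univ_sum_of_nonneg hx₀
  refine le_of_mul_le_mul_right ?_ hxu
  calc (μ - a) * (μ + 1) * x u ≤ (μ - a) * ∑ v, x v := by
        rw [mul_assoc]; exact mul_le_mul_of_nonneg_left hlower (sub_nonneg.2 hμa)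
    _ ≤ _ := hupper

theorem card_edgeFinset_add_card_edgeFinset_compl [DecidableEq V] :
    #G.edgeFinset + #Gᶜ.edgeFinset = (Fintype.card V).choose 2 := by
  rw [← card_union_of_disjoint (disjoint_edgeFinset.2 disjoint_compl_right), ← edgeFinset_sup,
    ← card_edgeFinset_top_eq_card_choose_two]
  congr!
  exact sup_compl_eq_top

end SimpleGraph

theorem exists_nonneg_adjMatrix_mulVec_eq_specRad {n : ℕ} [Nonempty (Fin n)]
    (G : SimpleGraph (Fin n)) [DecidableRel G.Adj] :
    ∃ x : Fin n → ℝ, 0 ≤ x ∧ x ≠ 0 ∧ G.adjMatrix ℝ *ᵥ x = specRad G • x := by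
  have hspec : specRad G = ⨆ i, (adjMatrix_isHermitian G).eigenvalues i := by
    unfold specRad
    congr!
  rw [hspec]
  exact (adjMatrix_isHermitian G).exists_nonneg_mulVec_eq_iSup_eigenvalues fun i j => by
    rw [adjMatrix_apply]
    positivity

/-- If δ(G) ≥ a ≥ 1 and ρ(G) ≥ n - 2, then e(Ḡ) ≤ n - ⌈a/2⌉ - 1. -/
theorem complement_edges_le_of_specRad {n a : ℕ} (ha : 1 ≤ a)
    (G : SimpleGraph (Fin n)) [DecidableRel G.Adj]
    (hδ : a ≤ G.minDegree) (hρ : (n : ℝ) - 2 ≤ specRad G) :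
    Gᶜ.edgeFinset.card + (a + 1) / 2 + 1 ≤ n := by
  have han : a < n := by
    rcases isEmpty_or_nonempty (Fin n) with _ | _
    · rw [minDegree_of_subsingleton] at hδ
      omega
    · simpa using hδ.trans_lt G.minDegree_lt_card
  have : Nonempty (Fin n) := ⟨⟨0, by omega⟩⟩
  obtain ⟨x, hx₀, hx, hμ⟩ := exists_nonneg_adjMatrix_mulVec_eq_specRad G
  have hHN := G.sub_mul_add_one_le_of_adjMatrix_mulVec_eq hx₀ hx hμ hδ
  rw [Fintype.card_fin] at hHN
  have hedges : (#G.edgeFinset : ℝ) + #Gᶜ.edgeFinset = n * (n - 1) / 2 := by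
    have h := G.card_edgeFinset_add_card_edgeFinset_compl
    rw [Fintype.card_fin] at h
    rw [← Nat.cast_choose_two, ← h]
    push_cast
    ring
  have hanR : (a : ℝ) + 1 ≤ n := by exact_mod_cast han
  have haR : (1 : ℝ) ≤ a := by exact_mod_cast ha
  have hmono : ((n : ℝ) - 2 - a) * (n - 1) ≤ (specRad G - a) * (specRad G + 1) := by
    nlinarith [mul_nonneg (sub_nonneg.2 hρ) (show 0 ≤ specRad G + n - 1 - a by linarith)]
  have hcompl : 2 * #Gᶜ.edgeFinset + a + 2 ≤ 2 * n := by
    have : (2 * #Gᶜ.edgeFinset + a + 2 : ℝ) ≤ 2 * n := by linarith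
    exact_mod_cast this
  omega
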